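/- arXiv:0810.2570 — 5 statements merged into one kernel-verified Lean document; each statement's English description precedes it below -/
import Mathlib

section
/- Let n ≥ 1 and let Q and Q′ be real normal defining functions of dimension n, defining hypersurfaces M and M′ with complexifications ℳ and ℳ′. Assume M is of finite type at 0 (Q(z,χ,0) ≢ 0 near 0) and M′ is of infinite type at 0 (Q′(z,χ,0) ≡ 0 near 0). Then every HSPM ℋ = (f,g,f̃,g̃) sending (ℳ,0) into (ℳ′,0) satisfies g ≡ 0 and g̃ ≡ 0 near 0. Conversely, for any ℂ^n-valued holomorphic maps f(z,w) and f̃(χ,τ) defined near 0 with f(0) = f̃(0) = 0, the quadruple (f, 0, f̃, 0) is an HSPM sending (ℳ,0) into (ℳ′,0). -/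
open Filter Topology Complex

namespace HSPMpaper

variable {n : ℕ}

/-- Partial derivative of `F` in the `i`-th coordinate direction. -/
noncomputable def pd (i : Fin n) (F : (Fin n → ℂ) → ℂ) : (Fin n → ℂ) → ℂ :=
  fun z => fderiv ℂ F z (Pi.single i 1)

/-- Iterated partial derivative `∂^α` for a multi-index `α`. -/
noncomputable def mpd (α : Fin n → ℕ) (F : (Fin n → ℂ) → ℂ) : (Fin n → ℂ) → ℂ :=
  ((List.ofFn fun i : Fin n => (pd i)^[α i]).foldr (· ∘ ·) id) F

/-- Componentwise complex conjugation on `ℂⁿ`. -/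
def conjV (z : Fin n → ℂ) : Fin n → ℂ := fun i => starRingEnd ℂ (z i)

/-- The conjugate defining function `Q̄(χ,z,τ) = conj (Q (conj χ) (conj z) (conj τ))`. -/
def QBar (Q : (Fin n → ℂ) → (Fin n → ℂ) → ℂ → ℂ) : (Fin n → ℂ) → (Fin n → ℂ) → ℂ → ℂ :=
  fun χ z τ => starRingEnd ℂ (Q (conjV χ) (conjV z) (starRingEnd ℂ τ))

/-- `Q` is a normal defining function (of dimension `n`): holomorphic near the origin of
`ℂⁿ × ℂⁿ × ℂ` and satisfying `Q(0,χ,τ) = τ` and `Q(z,0,τ) = τ` near `0`. -/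
def IsNormalDF (Q : (Fin n → ℂ) → (Fin n → ℂ) → ℂ → ℂ) : Prop :=
  (∀ᶠ p in 𝓝 (0 : (Fin n → ℂ) × (Fin n → ℂ) × ℂ),
      AnalyticAt ℂ (fun q : (Fin n → ℂ) × (Fin n → ℂ) × ℂ => Q q.1 q.2.1 q.2.2) p) ∧
  (∀ᶠ p in 𝓝 (0 : (Fin n → ℂ) × (Fin n → ℂ) × ℂ),
      Q 0 p.2.1 p.2.2 = p.2.2 ∧ Q p.1 0 p.2.2 = p.2.2)

/-- `Q` is a real normal defining function: normal and `Q(z,χ,Q̄(χ,z,w)) = w` near `0`. -/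
def IsRealNormalDF (Q : (Fin n → ℂ) → (Fin n → ℂ) → ℂ → ℂ) : Prop :=
  IsNormalDF Q ∧
  ∀ᶠ p in 𝓝 (0 : (Fin n → ℂ) × (Fin n → ℂ) × ℂ),
    Q p.1 p.2.1 (QBar Q p.2.1 p.1 p.2.2) = p.2.2

/-- `(f,g,f̃,g̃)` is a holomorphic Segre preserving map sending `(ℳ,0)` into `(ℳ',0)`. -/
def IsHSPM (Q Q' : (Fin n → ℂ) → (Fin n → ℂ) → ℂ → ℂ)
    (f : (Fin n → ℂ) → ℂ → Fin n → ℂ) (g : (Fin n → ℂ) → ℂ → ℂ)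
    (ft : (Fin n → ℂ) → ℂ → Fin n → ℂ) (gt : (Fin n → ℂ) → ℂ → ℂ) : Prop :=
  (∀ᶠ p in 𝓝 (0 : (Fin n → ℂ) × ℂ), AnalyticAt ℂ (fun q : (Fin n → ℂ) × ℂ => f q.1 q.2) p) ∧
  (∀ᶠ p in 𝓝 (0 : (Fin n → ℂ) × ℂ), AnalyticAt ℂ (fun q : (Fin n → ℂ) × ℂ => g q.1 q.2) p) ∧
  (∀ᶠ p in 𝓝 (0 : (Fin n → ℂ) × ℂ), AnalyticAt ℂ (fun q : (Fin n → ℂ) × ℂ => ft q.1 q.2) p) ∧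
  (∀ᶠ p in 𝓝 (0 : (Fin n → ℂ) × ℂ), AnalyticAt ℂ (fun q : (Fin n → ℂ) × ℂ => gt q.1 q.2) p) ∧
  f 0 0 = 0 ∧ g 0 0 = 0 ∧ ft 0 0 = 0 ∧ gt 0 0 = 0 ∧
  ∀ᶠ p in 𝓝 (0 : (Fin n → ℂ) × (Fin n → ℂ) × ℂ),
    g p.1 (Q p.1 p.2.1 p.2.2) =
      Q' (f p.1 (Q p.1 p.2.1 p.2.2)) (ft p.2.1 p.2.2) (gt p.2.1 p.2.2)

/-- `M` is of finite type at `0`: `(z,χ) ↦ Q(z,χ,0)` does not vanish identically near `0`. -/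
def FiniteType (Q : (Fin n → ℂ) → (Fin n → ℂ) → ℂ → ℂ) : Prop :=
  ¬ ∀ᶠ p in 𝓝 (0 : (Fin n → ℂ) × (Fin n → ℂ)), Q p.1 p.2 0 = 0

/-- Jacobian matrix of `z ↦ f(z,0)` at `z`. -/
noncomputable def jacz (f : (Fin n → ℂ) → ℂ → Fin n → ℂ) (z : Fin n → ℂ) :
    Matrix (Fin n) (Fin n) ℂ :=
  Matrix.of fun i j => pd j (fun z' => f z' 0 i) z

/-- `ℋ` is Segre transversal to `ℳ'` at `0`: `∂g/∂w(0,0) ≠ 0`. -/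
noncomputable def SegreTransversal (g : (Fin n → ℂ) → ℂ → ℂ) : Prop :=
  deriv (fun w => g 0 w) 0 ≠ 0

/-- `ℋ` is totally Segre nondegenerate at `0`. -/
def TotallySegreNondeg (f ft : (Fin n → ℂ) → ℂ → Fin n → ℂ) : Prop :=
  (¬ ∀ᶠ z in 𝓝 (0 : Fin n → ℂ), (jacz f z).det = 0) ∧
  (¬ ∀ᶠ χ in 𝓝 (0 : Fin n → ℂ), (jacz ft χ).det = 0)

/-- `ℋ` is transversally null: `g ≡ 0` and `g̃ ≡ 0` near `0`. -/
def TransversallyNull (g gt : (Fin n → ℂ) → ℂ → ℂ) : Prop :=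
  (∀ᶠ p in 𝓝 (0 : (Fin n → ℂ) × ℂ), g p.1 p.2 = 0) ∧
  (∀ᶠ p in 𝓝 (0 : (Fin n → ℂ) × ℂ), gt p.1 p.2 = 0)

/-- The `k`-th coordinate direction in `ℂⁿ × ℂ`. -/
noncomputable def dirCT (n : ℕ) (k : Fin (n + 1)) : (Fin n → ℂ) × ℂ :=
  if h : (k : ℕ) < n then (Pi.single ⟨k, h⟩ 1, 0) else (0, 1)

/-- `M` is holomorphically nondegenerate at `0`: for some `K`, the map
`(χ,τ) ↦ (∂_z^α Q(0,χ,τ))_{|α| ≤ K}` has generic rank `n+1`. -/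
def HolNondeg (Q : (Fin n → ℂ) → (Fin n → ℂ) → ℂ → ℂ) : Prop :=
  ∃ K : ℕ, ∃ A : Fin (n + 1) → Fin n → ℕ, (∀ j, (∑ i, A j i) ≤ K) ∧
    ¬ ∀ᶠ p in 𝓝 (0 : (Fin n → ℂ) × ℂ),
      (Matrix.of fun j k : Fin (n + 1) =>
        fderiv ℂ (fun q : (Fin n → ℂ) × ℂ => mpd (A j) (fun z => Q z q.1 q.2) 0) p
          (dirCT n k)).det = 0

/-- `M` is of class `𝒞` at `0`: for some `K`, the map
`χ ↦ (∂_z^α Q(0,χ,0))_{|α| ≤ K}` has generic rank `n`. -/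
def ClassC (Q : (Fin n → ℂ) → (Fin n → ℂ) → ℂ → ℂ) : Prop :=
  ∃ K : ℕ, ∃ A : Fin n → Fin n → ℕ, (∀ j, (∑ i, A j i) ≤ K) ∧
    ¬ ∀ᶠ χ in 𝓝 (0 : Fin n → ℂ),
      (Matrix.of fun j k : Fin n =>
        pd k (fun χ' => mpd (A j) (fun z => Q z χ' 0) 0) χ).det = 0

/-- `M` is finitely nondegenerate at `0`: for some `K`, the vectors
`∂_χ ∂_z^α Q(0,0,0)`, `|α| ≤ K`, span `ℂⁿ`. -/
def FinNondeg (Q : (Fin n → ℂ) → (Fin n → ℂ) → ℂ → ℂ) : Prop :=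
  ∃ K : ℕ, Submodule.span ℂ
    {v : Fin n → ℂ | ∃ α : Fin n → ℕ, (∑ i, α i) ≤ K ∧
      v = fun i => pd i (fun χ => mpd α (fun z => Q z χ 0) 0) 0} = ⊤

/-- Full Jacobian matrix of `(z,w) ↦ (f(z,w), g(z,w))` at `p ∈ ℂⁿ × ℂ`. -/
noncomputable def jacFull (f : (Fin n → ℂ) → ℂ → Fin n → ℂ) (g : (Fin n → ℂ) → ℂ → ℂ)
    (p : (Fin n → ℂ) × ℂ) : Matrix (Fin (n + 1)) (Fin (n + 1)) ℂ :=
  Matrix.of fun i k =>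
    fderiv ℂ (fun q : (Fin n → ℂ) × ℂ => (Fin.snoc (f q.1 q.2) (g q.1 q.2) : Fin (n + 1) → ℂ) i) p (dirCT n k)

/-- The degree-`d` homogeneous term of the Taylor series of `φ` at `0`. -/
noncomputable def homogTerm (d : ℕ) (φ : (Fin n → ℂ) → ℂ) : (Fin n → ℂ) → ℂ :=
  fun z => iteratedFDeriv ℂ d φ 0 (fun _ => z) / (d.factorial : ℂ)

/-- The order of vanishing of `φ` at `0`. -/
noncomputable def vanishOrder (φ : (Fin n → ℂ) → ℂ) : ℕ :=
  sInf {d | homogTerm d φ ≠ 0}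


end HSPMpaper

/-!
Put `z = 0` in the identity `g(z, Q(z,χ,τ)) = Q'(f, f̃, g̃)`. Since `Q(0,χ,τ) = τ` and
`Q'(0,χ',τ') = τ'`, taking also `τ = 0` gives `g̃(χ,0) = 0`; then `τ = 0` alone and the infinite
type of `M'` give `g(z, Q(z,χ,0)) ≡ 0`. For every `z` at which `Q(z,·,0) ≢ 0`, the values
`Q(z,χ,0)` accumulate at `0 = Q(z,0,0)`, so `g(z,·) ≡ 0` by the isolated zeros principle; as
`Q(·,·,0) ≢ 0`, the identity theorem applied to `g(z,w) · Q(z,χ,0)` turns this into `g ≡ 0`.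
Finally `z = 0` gives `Q'(f(0,τ), f̃, g̃) = 0 = Q'(f(0,τ), f̃, 0)`, and `∂Q'/∂τ(0) = 1` makes
`τ ↦ Q'(z',χ',τ)` injective near `0`, uniformly in `(z',χ')`; hence `g̃ ≡ 0`.
-/

open Metric

section

variable {𝕜 : Type*} [NontriviallyNormedField 𝕜]
  {E : Type*} [NormedAddCommGroup E] [NormedSpace 𝕜 E]

theorem AnalyticAt.tendsto_nhds_zero {F : Type*} [NormedAddCommGroup F] [NormedSpace 𝕜 F]
    {φ : E → F} (h : AnalyticAt 𝕜 φ 0) (h₀ : φ 0 = 0) : Tendsto φ (𝓝 0) (𝓝 0) := by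
  simpa [h₀] using h.continuousAt.tendsto

theorem AnalyticAt.eventually_eq_zero_of_comp {X F : Type*} [TopologicalSpace X]
    [NormedAddCommGroup F] [NormedSpace 𝕜 F] {φ : 𝕜 → F} {ψ : X → 𝕜} {x₀ : X}
    (hφ : AnalyticAt 𝕜 φ (ψ x₀)) (hψ : ContinuousAt ψ x₀) (hψne : ¬ ∀ᶠ x in 𝓝 x₀, ψ x = ψ x₀)
    (hcomp : ∀ᶠ x in 𝓝 x₀, φ (ψ x) = 0) :
    ∀ᶠ w in 𝓝 (ψ x₀), φ w = 0 := by
  refine hφ.eventually_eq_zero_or_eventually_ne_zero.resolve_right fun hne => hψne ?_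
  filter_upwards [hψ.eventually (eventually_nhdsWithin_iff.1 hne), hcomp] with x hx hφx
  by_contra h
  exact hx h hφx

theorem AnalyticOnNhd.eqOn_zero_of_mul_eq_zero {f h : E → 𝕜} {U : Set E}
    (hf : AnalyticOnNhd 𝕜 f U) (hU : IsPreconnected U) (hUo : IsOpen U) (hh : ContinuousOn h U)
    (hfh : ∀ x ∈ U, f x * h x = 0) {x₀ : E} (hx₀ : x₀ ∈ U) (hne : h x₀ ≠ 0) :
    Set.EqOn f 0 U := by
  refine hf.eqOn_zero_of_preconnected_of_eventuallyEq_zero hU hx₀ ?_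
  filter_upwards [hUo.mem_nhds hx₀, (hh.continuousAt (hUo.mem_nhds hx₀)).eventually_ne hne]
    with x hxU hx
  exact (mul_eq_zero.1 (hfh x hxU)).resolve_right hx

theorem eventually_snd_eq_zero_of_apply_eq_apply_zero {G : E → 𝕜 → 𝕜}
    (hG : AnalyticAt 𝕜 (fun p : E × 𝕜 => G p.1 p.2) 0) (hG₀ : ∀ᶠ t in 𝓝 0, G 0 t = t) :
    ∀ᶠ p in 𝓝 (0 : E × 𝕜), G p.1 p.2 = G p.1 0 → p.2 = 0 := by
  obtain ⟨s, hs, happrox⟩ :=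
    hG.hasStrictFDerivAt.approximates_deriv_on_nhds (c := 1 / 2) (Or.inr (by norm_num))
  set L := fderiv 𝕜 (fun p : E × 𝕜 => G p.1 p.2) 0
  have hL : ∀ t, L (0, t) = t := by
    have h₁ : HasFDerivAt (fun t : 𝕜 => G 0 t) (L.comp (ContinuousLinearMap.inr 𝕜 E 𝕜)) 0 :=
      hG.differentiableAt.hasFDerivAt.comp 0 (ContinuousLinearMap.inr 𝕜 E 𝕜).hasFDerivAt
    have h₂ : HasFDerivAt (fun t : 𝕜 => G 0 t) (ContinuousLinearMap.id 𝕜 𝕜) 0 :=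
      (hasFDerivAt_id 0).congr_of_eventuallyEq hG₀
    exact fun t => DFunLike.congr_fun (h₁.unique h₂) t
  have hs₀ : ∀ᶠ p in 𝓝 (0 : E × 𝕜), (p.1, (0 : 𝕜)) ∈ s :=
    ((continuous_fst.prodMk continuous_const).tendsto' (0 : E × 𝕜) 0 rfl).eventually hs
  filter_upwards [hs, hs₀] with p hp hp₀ heq
  have key : ‖G p.1 p.2 - G p.1 0 - L (p - (p.1, 0))‖ ≤ (1 / 2 : NNReal) * ‖p - (p.1, 0)‖ :=
    happrox p hp (p.1, 0) hp₀
  have hdiff : p - (p.1, 0) = (0, p.2) := Prod.ext (sub_self _) (sub_zero _)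
  rw [heq, sub_self, zero_sub, norm_neg, hdiff, hL, Prod.norm_mk, norm_zero,
    max_eq_right (norm_nonneg _)] at key
  push_cast at key
  exact norm_eq_zero.1 (by linarith [norm_nonneg p.2])

end

theorem mk_mem_ball_zero {X Y : Type*} [SeminormedAddCommGroup X] [SeminormedAddCommGroup Y]
    {x : X} {y : Y} {r : ℝ} (hx : x ∈ ball 0 r) (hy : y ∈ ball 0 r) :
    (x, y) ∈ ball (0 : X × Y) r :=
  ball_prod_same (0 : X) (0 : Y) r ▸ Set.mk_mem_prod hx hy

theorem eqOn_zero_of_comp_eqOn_zero {F : Type*} [NormedAddCommGroup F] [NormedSpace ℂ F]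
    {φ : ℂ → ℂ} {ψ : F → ℂ} {r s : ℝ} (hφ : AnalyticOnNhd ℂ φ (ball 0 s))
    (hψ : AnalyticOnNhd ℂ ψ (ball 0 r)) (hψ₀ : ψ 0 = 0) (hcomp : ∀ x ∈ ball 0 r, φ (ψ x) = 0)
    {x : F} (hx : x ∈ ball 0 r) (hψx : ψ x ≠ 0) :
    Set.EqOn φ 0 (ball 0 s) := by
  intro w hw
  have hr := pos_of_mem_ball hx
  have hs := pos_of_mem_ball hw
  have hψ_germ : ¬ ∀ᶠ x' in 𝓝 0, ψ x' = ψ 0 := fun h => hψx <|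
    hψ.eqOn_zero_of_preconnected_of_eventuallyEq_zero (convex_ball 0 r).isPreconnected
      (mem_ball_self hr) (by rwa [hψ₀] at h) hx
  have hφ_germ : ∀ᶠ w' in 𝓝 (ψ 0), φ w' = 0 :=
    AnalyticAt.eventually_eq_zero_of_comp (by rw [hψ₀]; exact hφ 0 (mem_ball_self hs))
      (hψ 0 (mem_ball_self hr)).continuousAt hψ_germ (eventually_of_mem (ball_mem_nhds 0 hr) hcomp)
  rw [hψ₀] at hφ_germ
  exact hφ.eqOn_zero_of_preconnected_of_eventuallyEq_zero (convex_ball 0 s).isPreconnected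
    (mem_ball_self hs) hφ_germ hw

theorem eventually_eq_zero_of_comp_eq_zero {E F : Type*} [NormedAddCommGroup E]
    [NormedSpace ℂ E] [NormedAddCommGroup F] [NormedSpace ℂ F] {g : E → ℂ → ℂ} {q : E → F → ℂ}
    (hg : ∀ᶠ p in 𝓝 (0 : E × ℂ), AnalyticAt ℂ (fun p : E × ℂ => g p.1 p.2) p)
    (hq : ∀ᶠ p in 𝓝 (0 : E × F), AnalyticAt ℂ (fun p : E × F => q p.1 p.2) p)
    (hq₀ : ∀ᶠ z in 𝓝 (0 : E), q z 0 = 0)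
    (hqne : ¬ ∀ᶠ p in 𝓝 (0 : E × F), q p.1 p.2 = 0)
    (hgq : ∀ᶠ p in 𝓝 (0 : E × F), g p.1 (q p.1 p.2) = 0) :
    ∀ᶠ p in 𝓝 (0 : E × ℂ), g p.1 p.2 = 0 := by
  obtain ⟨r₁, hr₁, hgr⟩ := eventually_nhds_iff_ball.1 hg
  obtain ⟨r₂, hr₂, hqr⟩ := eventually_nhds_iff_ball.1 (hq.and (hgq.and (hq₀.prod_inl_nhds 0)))
  set r := min r₁ r₂
  have hr : 0 < r := lt_min hr₁ hr₂
  have hr₁' : ball (0 : E × ℂ) r ⊆ ball 0 r₁ := ball_subset_ball (min_le_left _ _)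
  have hr₂' : ball (0 : E × F) r ⊆ ball 0 r₂ := ball_subset_ball (min_le_right _ _)
  have slice : ∀ z ∈ ball (0 : E) r, ∀ χ ∈ ball (0 : F) r, q z χ ≠ 0 →
      ∀ w ∈ ball (0 : ℂ) r, g z w = 0 := fun z hz χ hχ hqχ =>
    eqOn_zero_of_comp_eqOn_zero
      (fun w hw => (hgr _ (hr₁' (mk_mem_ball_zero hz hw))).comp
        (analyticAt_const.prod analyticAt_id))
      (fun χ hχ => (hqr _ (hr₂' (mk_mem_ball_zero hz hχ))).1.comp
        (analyticAt_const.prod analyticAt_id))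
      (hqr _ (hr₂' (mk_mem_ball_zero hz (mem_ball_self hr)))).2.2
      (fun χ hχ => (hqr _ (hr₂' (mk_mem_ball_zero hz hχ))).2.1) hχ hqχ
  filter_upwards [ball_mem_nhds (0 : E × ℂ) hr] with ⟨z, w⟩ hzw
  rw [← ball_prod_same] at hzw
  have hg_w : AnalyticOnNhd ℂ (fun p : E × F => g p.1 w) (ball 0 r) := by
    rintro ⟨z', χ⟩ hp
    rw [← ball_prod_same] at hp
    exact (hgr _ (hr₁' (mk_mem_ball_zero hp.1 hzw.2))).comp (f := fun p : E × F => (p.1, w))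
      (analyticAt_fst.prod analyticAt_const)
  obtain ⟨p₀, hp₀, hqp₀⟩ : ∃ p ∈ ball (0 : E × F) r, q p.1 p.2 ≠ 0 := by
    by_contra! h
    exact hqne (eventually_of_mem (ball_mem_nhds _ hr) h)
  refine hg_w.eqOn_zero_of_mul_eq_zero (convex_ball 0 r).isPreconnected isOpen_ball
    (fun p hp => (hqr p (hr₂' hp)).1.continuousAt.continuousWithinAt) ?_ hp₀ hqp₀
    (mk_mem_ball_zero hzw.1 (mem_ball_self hr))
  rintro ⟨z', χ⟩ hp
  rw [← ball_prod_same] at hp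
  by_cases hqχ : q z' χ = 0
  · simp [hqχ]
  · simp [slice z' hp.1 χ hp.2 hqχ w hzw.2]

namespace HSPMpaper

variable {n : ℕ}

section

variable {Q Q' : (Fin n → ℂ) → (Fin n → ℂ) → ℂ → ℂ}

namespace IsNormalDF

theorem tendsto_zero (hQ : IsNormalDF Q) :
    Tendsto (fun p : (Fin n → ℂ) × (Fin n → ℂ) × ℂ => Q p.1 p.2.1 p.2.2) (𝓝 0) (𝓝 0) :=
  hQ.1.self_of_nhds.tendsto_nhds_zero hQ.2.self_of_nhds.1

theorem eventually_apply_zero_left (hQ : IsNormalDF Q) :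
    ∀ᶠ p in 𝓝 (0 : (Fin n → ℂ) × ℂ), Q 0 p.1 p.2 = p.2 :=
  ((continuous_const.prodMk continuous_id).tendsto' 0 0 rfl).eventually (hQ.2.mono fun _ h => h.1)

theorem eventually_apply_zero_middle (hQ : IsNormalDF Q) :
    ∀ᶠ z in 𝓝 (0 : Fin n → ℂ), Q z 0 0 = 0 :=
  ((continuous_id.prodMk continuous_const).tendsto' (0 : Fin n → ℂ) (0, 0, 0) rfl).eventually
    (hQ.2.mono fun _ h => h.2)

theorem eventually_analyticAt_apply_zero_right (hQ : IsNormalDF Q) :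
    ∀ᶠ p in 𝓝 (0 : (Fin n → ℂ) × (Fin n → ℂ)),
      AnalyticAt ℂ (fun p : (Fin n → ℂ) × (Fin n → ℂ) => Q p.1 p.2 0) p := by
  have hT : Tendsto (fun p : (Fin n → ℂ) × (Fin n → ℂ) => (p.1, p.2, (0 : ℂ))) (𝓝 0) (𝓝 0) :=
    (continuous_fst.prodMk (continuous_snd.prodMk continuous_const)).tendsto' 0 0 rfl
  filter_upwards [hT.eventually hQ.1] with p hp
  exact hp.comp (f := fun p : (Fin n → ℂ) × (Fin n → ℂ) => (p.1, p.2, (0 : ℂ)))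
    (analyticAt_fst.prod (analyticAt_snd.prod analyticAt_const))

end IsNormalDF

namespace IsHSPM

variable {f ft : (Fin n → ℂ) → ℂ → Fin n → ℂ} {g gt : (Fin n → ℂ) → ℂ → ℂ}

theorem eventually_apply_zero_left (hQ : IsNormalDF Q) (h : IsHSPM Q Q' f g ft gt) :
    ∀ᶠ p in 𝓝 (0 : (Fin n → ℂ) × ℂ), g 0 p.2 = Q' (f 0 p.2) (ft p.1 p.2) (gt p.1 p.2) := by
  have hT : Tendsto (fun p : (Fin n → ℂ) × ℂ => ((0 : Fin n → ℂ), p)) (𝓝 0) (𝓝 0) :=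
    (continuous_const.prodMk continuous_id).tendsto' 0 0 rfl
  filter_upwards [hT.eventually h.2.2.2.2.2.2.2.2, hQ.eventually_apply_zero_left] with p hp hQp
  simpa only [hQp] using hp

theorem eventually_gt_apply_zero_eq_zero (hQ : IsNormalDF Q) (hQ' : IsNormalDF Q')
    (h : IsHSPM Q Q' f g ft gt) : ∀ᶠ χ in 𝓝 (0 : Fin n → ℂ), gt χ 0 = 0 := by
  have hslice := h.eventually_apply_zero_left hQ
  obtain ⟨-, -, hft, hgt, hf₀, hg₀, hft₀, hgt₀, -⟩ := h
  have hT : Tendsto (fun χ : Fin n → ℂ => (χ, (0 : ℂ))) (𝓝 0) (𝓝 0) :=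
    (continuous_id.prodMk continuous_const).tendsto' 0 0 rfl
  have hT' : Tendsto (fun χ : Fin n → ℂ => (ft χ 0, gt χ 0)) (𝓝 0) (𝓝 0) :=
    ((hft.self_of_nhds.tendsto_nhds_zero hft₀).prodMk_nhds
      (hgt.self_of_nhds.tendsto_nhds_zero hgt₀)).comp hT
  filter_upwards [hT.eventually hslice, hT'.eventually hQ'.eventually_apply_zero_left]
    with χ hχ hQ'χ
  calc gt χ 0 = Q' (f 0 0) (ft χ 0) (gt χ 0) := by rw [hf₀, hQ'χ]
    _ = g 0 0 := hχ.symm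
    _ = 0 := hg₀

theorem eventually_g_eq_zero (hQ : IsNormalDF Q) (hQ' : IsNormalDF Q') (hM : FiniteType Q)
    (hM' : ∀ᶠ p in 𝓝 (0 : (Fin n → ℂ) × (Fin n → ℂ)), Q' p.1 p.2 0 = 0)
    (h : IsHSPM Q Q' f g ft gt) : ∀ᶠ p in 𝓝 (0 : (Fin n → ℂ) × ℂ), g p.1 p.2 = 0 := by
  have hgt := h.eventually_gt_apply_zero_eq_zero hQ hQ'
  obtain ⟨hf, hg, hft, -, hf₀, -, hft₀, -, hEq⟩ := h
  refine eventually_eq_zero_of_comp_eq_zero (q := fun z χ => Q z χ 0) hg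
    hQ.eventually_analyticAt_apply_zero_right hQ.eventually_apply_zero_middle hM ?_
  have hT : Tendsto (fun p : (Fin n → ℂ) × (Fin n → ℂ) => (p.1, p.2, (0 : ℂ))) (𝓝 0) (𝓝 0) :=
    (continuous_fst.prodMk (continuous_snd.prodMk continuous_const)).tendsto' 0 0 rfl
  have hT' : Tendsto (fun p : (Fin n → ℂ) × (Fin n → ℂ) => (f p.1 (Q p.1 p.2 0), ft p.2 0))
      (𝓝 0) (𝓝 0) :=
    ((hf.self_of_nhds.tendsto_nhds_zero hf₀).comp
      ((continuous_fst.tendsto' 0 0 rfl).prodMk_nhds (hQ.tendsto_zero.comp hT))).prodMk_nhds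
    ((hft.self_of_nhds.tendsto_nhds_zero hft₀).comp
      ((continuous_snd.prodMk continuous_const).tendsto' 0 0 rfl))
  filter_upwards [hT.eventually hEq, (continuous_snd.tendsto' 0 0 rfl).eventually hgt,
    hT'.eventually hM'] with p hp hgtp hM'p
  rw [hp, hgtp]
  exact hM'p

theorem eventually_gt_eq_zero (hQ : IsNormalDF Q) (hQ' : IsNormalDF Q')
    (hM' : ∀ᶠ p in 𝓝 (0 : (Fin n → ℂ) × (Fin n → ℂ)), Q' p.1 p.2 0 = 0)
    (h : IsHSPM Q Q' f g ft gt) (hg : ∀ᶠ p in 𝓝 (0 : (Fin n → ℂ) × ℂ), g p.1 p.2 = 0) :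
    ∀ᶠ p in 𝓝 (0 : (Fin n → ℂ) × ℂ), gt p.1 p.2 = 0 := by
  have hslice := h.eventually_apply_zero_left hQ
  obtain ⟨hf, -, hft, hgt, hf₀, -, hft₀, hgt₀, -⟩ := h
  have hinj := eventually_snd_eq_zero_of_apply_eq_apply_zero
    (G := fun x : (Fin n → ℂ) × (Fin n → ℂ) => Q' x.1 x.2)
    (hQ'.1.self_of_nhds.comp_of_eq
      ((ContinuousLinearEquiv.prodAssoc ℂ (Fin n → ℂ) (Fin n → ℂ) ℂ).analyticAt 0) rfl)
    (((continuous_const.prodMk continuous_id).tendsto' 0 0 rfl).eventually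
      hQ'.eventually_apply_zero_left)
  have hz : Tendsto (fun p : (Fin n → ℂ) × ℂ => ((0 : Fin n → ℂ), p.2)) (𝓝 0) (𝓝 0) :=
    (continuous_const.prodMk continuous_snd).tendsto' 0 0 rfl
  have hT : Tendsto (fun p : (Fin n → ℂ) × ℂ => (f 0 p.2, ft p.1 p.2)) (𝓝 0) (𝓝 0) :=
    ((hf.self_of_nhds.tendsto_nhds_zero hf₀).comp hz).prodMk_nhds
      (hft.self_of_nhds.tendsto_nhds_zero hft₀)
  filter_upwards [hslice, hz.eventually hg, hT.eventually hM',
    (hT.prodMk_nhds (hgt.self_of_nhds.tendsto_nhds_zero hgt₀)).eventually hinj]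
    with p hQ'p hgp hM'p hinjp
  refine hinjp ?_
  rw [hM'p, ← hQ'p, hgp]

end IsHSPM

theorem isHSPM_of_transversal_eq_zero (hQ : IsNormalDF Q)
    (hM' : ∀ᶠ p in 𝓝 (0 : (Fin n → ℂ) × (Fin n → ℂ)), Q' p.1 p.2 0 = 0)
    {f ft : (Fin n → ℂ) → ℂ → Fin n → ℂ}
    (hf : ∀ᶠ p in 𝓝 (0 : (Fin n → ℂ) × ℂ), AnalyticAt ℂ (fun q : (Fin n → ℂ) × ℂ => f q.1 q.2) p)
    (hft : ∀ᶠ p in 𝓝 (0 : (Fin n → ℂ) × ℂ),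
      AnalyticAt ℂ (fun q : (Fin n → ℂ) × ℂ => ft q.1 q.2) p)
    (hf₀ : f 0 0 = 0) (hft₀ : ft 0 0 = 0) :
    IsHSPM Q Q' f (fun _ _ => 0) ft (fun _ _ => 0) := by
  refine ⟨hf, .of_forall fun _ => analyticAt_const, hft, .of_forall fun _ => analyticAt_const,
    hf₀, rfl, hft₀, rfl, ?_⟩
  have hT : Tendsto (fun p : (Fin n → ℂ) × (Fin n → ℂ) × ℂ =>
      (f p.1 (Q p.1 p.2.1 p.2.2), ft p.2.1 p.2.2)) (𝓝 0) (𝓝 0) :=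
    ((hf.self_of_nhds.tendsto_nhds_zero hf₀).comp
      ((continuous_fst.tendsto' 0 0 rfl).prodMk_nhds hQ.tendsto_zero)).prodMk_nhds
    ((hft.self_of_nhds.tendsto_nhds_zero hft₀).comp (continuous_snd.tendsto' 0 0 rfl))
  filter_upwards [hT.eventually hM'] with p hp
  exact hp.symm

end

theorem statement7_general (n : ℕ)
    (Q Q' : (Fin n → ℂ) → (Fin n → ℂ) → ℂ → ℂ)
    (hQ : IsRealNormalDF Q) (hQ' : IsRealNormalDF Q')
    (hM : FiniteType Q)
    (hM' : ∀ᶠ p in 𝓝 (0 : (Fin n → ℂ) × (Fin n → ℂ)), Q' p.1 p.2 0 = 0) :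
    (∀ (f ft : (Fin n → ℂ) → ℂ → Fin n → ℂ) (g gt : (Fin n → ℂ) → ℂ → ℂ),
      IsHSPM Q Q' f g ft gt →
        (∀ᶠ p in 𝓝 (0 : (Fin n → ℂ) × ℂ), g p.1 p.2 = 0) ∧
        (∀ᶠ p in 𝓝 (0 : (Fin n → ℂ) × ℂ), gt p.1 p.2 = 0)) ∧
    (∀ f ft : (Fin n → ℂ) → ℂ → Fin n → ℂ,
      (∀ᶠ p in 𝓝 (0 : (Fin n → ℂ) × ℂ),
        AnalyticAt ℂ (fun q : (Fin n → ℂ) × ℂ => f q.1 q.2) p) →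
      (∀ᶠ p in 𝓝 (0 : (Fin n → ℂ) × ℂ),
        AnalyticAt ℂ (fun q : (Fin n → ℂ) × ℂ => ft q.1 q.2) p) →
      f 0 0 = 0 → ft 0 0 = 0 →
      IsHSPM Q Q' f (fun _ _ => 0) ft (fun _ _ => 0)) := by
  refine ⟨fun f ft g gt h => ?_, fun f ft hf hft hf₀ hft₀ =>
    isHSPM_of_transversal_eq_zero hQ.1 hM' hf hft hf₀ hft₀⟩
  have hg := h.eventually_g_eq_zero hQ.1 hQ'.1 hM hM'
  exact ⟨hg, h.eventually_gt_eq_zero hQ.1 hQ'.1 hM' hg⟩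

/-- Lemma 2.1: if `M` is of finite type at `0` and `M'` of infinite type at
`0`, then every HSPM from `(ℳ,0)` to `(ℳ',0)` has vanishing transversal components; conversely
any pair `f, f̃` of holomorphic maps vanishing at `0` gives rise to the HSPM `(f,0,f̃,0)`. -/
theorem statement7 (n : ℕ) (hn : 1 ≤ n)
    (Q Q' : (Fin n → ℂ) → (Fin n → ℂ) → ℂ → ℂ)
    (hQ : IsRealNormalDF Q) (hQ' : IsRealNormalDF Q')
    (hM : FiniteType Q)
    (hM' : ∀ᶠ p in 𝓝 (0 : (Fin n → ℂ) × (Fin n → ℂ)), Q' p.1 p.2 0 = 0) :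
    (∀ (f ft : (Fin n → ℂ) → ℂ → Fin n → ℂ) (g gt : (Fin n → ℂ) → ℂ → ℂ),
      IsHSPM Q Q' f g ft gt →
        (∀ᶠ p in 𝓝 (0 : (Fin n → ℂ) × ℂ), g p.1 p.2 = 0) ∧
        (∀ᶠ p in 𝓝 (0 : (Fin n → ℂ) × ℂ), gt p.1 p.2 = 0)) ∧
    (∀ f ft : (Fin n → ℂ) → ℂ → Fin n → ℂ,
      (∀ᶠ p in 𝓝 (0 : (Fin n → ℂ) × ℂ),
        AnalyticAt ℂ (fun q : (Fin n → ℂ) × ℂ => f q.1 q.2) p) →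
      (∀ᶠ p in 𝓝 (0 : (Fin n → ℂ) × ℂ),
        AnalyticAt ℂ (fun q : (Fin n → ℂ) × ℂ => ft q.1 q.2) p) →
      f 0 0 = 0 → ft 0 0 = 0 →
      IsHSPM Q Q' f (fun _ _ => 0) ft (fun _ _ => 0)) :=
  statement7_general n Q Q' hQ hQ' hM hM'

end HSPMpaper
end

section
/- Let n ≥ 1 and let Q be a real normal defining function of dimension n that is finitely nondegenerate at 0. Then for every neighborhood U of 0 in ℂ^n there exist points a₁, …, a_n ∈ U such that the n vectors ∂_z Q̄(a_j, 0, 0) ∈ ℂ^n (the gradient of Q̄(χ,z,τ) with respect to its second group of n variables, evaluated at (a_j,0,0)), j = 1, …, n, are linearly independent over ℂ. Equivalently, for every neighborhood U of 0 in ℂ^n there exist b₁, …, b_n ∈ U such that the gradient vectors ∂_χ Q(b_j, 0, 0) ∈ ℂ^n, j = 1, …, n, are linearly independent over ℂ. -/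
open Filter Topology Complex

namespace HSPMpaper

variable {n : ℕ}

/-!
Let `F(b) = ∂_χ Q(b,0,0) ∈ ℂⁿ`, which is holomorphic in `b`. If the values of `F` on a
neighbourhood `V` of `0` spanned a proper subspace, some functional `φ ≠ 0` would vanish on
`F(V)`, hence so would every derivative of the holomorphic function `φ ∘ F` at `0`. As the
`z`- and `χ`-derivatives of `Q` commute, `∂_z^α (φ ∘ F)(0) = φ (∂_χ ∂_z^α Q(0,0,0))`, so `φ`
would annihilate vectors spanning `ℂⁿ` by finite nondegeneracy. Hence a basis of `ℂⁿ` can be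
picked among the `F(b)`, `b ∈ V`. For `Q̄` take the conjugate points: by the chain rule for
`z ↦ conj (G (conj z))`, `∂_z Q̄(conj b,0,0) = conj ∂_χ Q(b,0,0)`.
-/

section DirectionalDerivative

variable {E E₁ E₂ F : Type*} [NormedAddCommGroup E] [NormedSpace ℂ E]
  [NormedAddCommGroup E₁] [NormedSpace ℂ E₁] [NormedAddCommGroup E₂] [NormedSpace ℂ E₂]
  [NormedAddCommGroup F] [NormedSpace ℂ F]

noncomputable def dirDeriv (v : E) (f : E → F) : E → F := fun x => fderiv ℂ f x v

noncomputable def iterDirDeriv (L : List E) (f : E → F) : E → F := L.foldr dirDeriv f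

@[simp] lemma iterDirDeriv_cons (v : E) (L : List E) (f : E → F) :
    iterDirDeriv (v :: L) f = dirDeriv v (iterDirDeriv L f) := rfl

lemma iterDirDeriv_append (L₁ L₂ : List E) (f : E → F) :
    iterDirDeriv (L₁ ++ L₂) f = iterDirDeriv L₁ (iterDirDeriv L₂ f) :=
  List.foldr_append

lemma iterDirDeriv_replicate (m : ℕ) (v : E) (f : E → F) :
    iterDirDeriv (List.replicate m v) f = (dirDeriv v)^[m] f := by
  induction m with
  | zero => rfl
  | succ m ih => rw [List.replicate_succ, iterDirDeriv_cons, ih, Function.iterate_succ_apply']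

lemma dirDeriv_zero (v : E) : dirDeriv v (0 : E → F) = 0 := by
  ext x; simp [dirDeriv]

lemma iterDirDeriv_zero (L : List E) : iterDirDeriv L (0 : E → F) = 0 := by
  induction L with
  | nil => rfl
  | cons v L ih => rw [iterDirDeriv_cons, ih, dirDeriv_zero]

lemma dirDeriv_congr_of_eventuallyEq {f g : E → F} {x : E} (h : f =ᶠ[𝓝 x] g) (v : E) :
    dirDeriv v f =ᶠ[𝓝 x] dirDeriv v g :=
  (h.fderiv (𝕜 := ℂ)).mono fun y hy => by simp only [dirDeriv, hy]

lemma iterDirDeriv_congr_of_eventuallyEq {f g : E → F} {x : E} (h : f =ᶠ[𝓝 x] g)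
    (L : List E) : iterDirDeriv L f =ᶠ[𝓝 x] iterDirDeriv L g := by
  induction L with
  | nil => exact h
  | cons v L ih => exact dirDeriv_congr_of_eventuallyEq ih v

lemma dirDeriv_comp_prodMk_left {f : E₁ × E₂ → F} {z : E₁} {χ : E₂}
    (hf : DifferentiableAt ℂ f (z, χ)) (u : E₁) :
    dirDeriv u (fun z' => f (z', χ)) z = dirDeriv (u, 0) f (z, χ) := by
  have h := hf.hasFDerivAt.comp z (hasFDerivAt_prodMk_left (𝕜 := ℂ) z χ)
  simp [dirDeriv, ← Function.comp_def, h.fderiv]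

lemma dirDeriv_comp_prodMk_right {f : E₁ × E₂ → F} {z : E₁} {χ : E₂}
    (hf : DifferentiableAt ℂ f (z, χ)) (u : E₂) :
    dirDeriv u (fun χ' => f (z, χ')) χ = dirDeriv (0, u) f (z, χ) := by
  have h := hf.hasFDerivAt.comp χ (hasFDerivAt_prodMk_right (𝕜 := ℂ) z χ)
  simp [dirDeriv, ← Function.comp_def, h.fderiv]

variable [CompleteSpace F]

lemma _root_.AnalyticAt.dirDeriv {f : E → F} {x : E} (hf : AnalyticAt ℂ f x) (v : E) :
    AnalyticAt ℂ (dirDeriv v f) x :=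
  ((ContinuousLinearMap.apply ℂ F v).analyticAt _).comp hf.fderiv

lemma _root_.AnalyticAt.iterDirDeriv {f : E → F} {x : E} (hf : AnalyticAt ℂ f x) (L : List E) :
    AnalyticAt ℂ (iterDirDeriv L f) x := by
  induction L with
  | nil => exact hf
  | cons v L ih => exact ih.dirDeriv v

lemma dirDeriv_dirDeriv_comm {f : E → F} {x : E} (hf : AnalyticAt ℂ f x) (u v : E) :
    dirDeriv u (dirDeriv v f) x = dirDeriv v (dirDeriv u f) x := by
  have hfderiv (w : E) : fderiv ℂ (dirDeriv w f) x = (fderiv ℂ (fderiv ℂ f) x).flip w := by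
    change fderiv ℂ (fun y => fderiv ℂ f y w) x = _
    simpa using fderiv_clm_apply hf.fderiv.differentiableAt (differentiableAt_const w)
  rw [dirDeriv, dirDeriv, hfderiv, hfderiv]
  exact hf.contDiffAt.isSymmSndFDerivAt_of_omega u v

lemma dirDeriv_iterDirDeriv_eventuallyEq {f : E → F} {x : E} (hf : AnalyticAt ℂ f x)
    (u : E) (L : List E) :
    dirDeriv u (iterDirDeriv L f) =ᶠ[𝓝 x] iterDirDeriv L (dirDeriv u f) := by
  induction L generalizing x with
  | nil => rfl
  | cons v L ih =>
    filter_upwards [hf.eventually_analyticAt] with y hy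
    calc dirDeriv u (dirDeriv v (iterDirDeriv L f)) y
        = dirDeriv v (dirDeriv u (iterDirDeriv L f)) y :=
          dirDeriv_dirDeriv_comm (hy.iterDirDeriv L) u v
      _ = dirDeriv v (iterDirDeriv L (dirDeriv u f)) y :=
          (dirDeriv_congr_of_eventuallyEq (ih hy) v).self_of_nhds

lemma iterDirDeriv_comp_prodMk_left {f : E₁ × E₂ → F} {z : E₁} {χ : E₂}
    (hf : AnalyticAt ℂ f (z, χ)) (L : List E₁) :
    iterDirDeriv L (fun z' => f (z', χ)) z = iterDirDeriv (L.map (·, (0 : E₂))) f (z, χ) := by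
  induction L generalizing z with
  | nil => rfl
  | cons u L ih =>
    have hnear : ∀ᶠ z' in 𝓝 z, AnalyticAt ℂ f (z', χ) :=
      (continuous_id.prodMk continuous_const).continuousAt.eventually hf.eventually_analyticAt
    calc iterDirDeriv (u :: L) (fun z' => f (z', χ)) z
        = dirDeriv u (fun z' => iterDirDeriv (L.map (·, (0 : E₂))) f (z', χ)) z :=
          (dirDeriv_congr_of_eventuallyEq (hnear.mono fun z' hz' => ih hz') u).self_of_nhds
      _ = _ := dirDeriv_comp_prodMk_left (hf.iterDirDeriv _).differentiableAt u

lemma dirDeriv_iterDirDeriv_partial_comm {f : E₁ × E₂ → F} {z : E₁} {χ : E₂}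
    (hf : AnalyticAt ℂ f (z, χ)) (L : List E₁) (c : E₂) :
    dirDeriv c (fun χ' => iterDirDeriv L (fun z' => f (z', χ')) z) χ
      = iterDirDeriv L (fun z' => dirDeriv c (fun χ' => f (z', χ')) χ) z := by
  set L' := L.map (·, (0 : E₂))
  have hnear_χ : ∀ᶠ χ' in 𝓝 χ, AnalyticAt ℂ f (z, χ') :=
    (continuous_const.prodMk continuous_id).continuousAt.eventually hf.eventually_analyticAt
  have hnear_z : ∀ᶠ z' in 𝓝 z, AnalyticAt ℂ f (z', χ) :=
    (continuous_id.prodMk continuous_const).continuousAt.eventually hf.eventually_analyticAt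
  calc _ = dirDeriv c (fun χ' => iterDirDeriv L' f (z, χ')) χ :=
        (dirDeriv_congr_of_eventuallyEq
          (hnear_χ.mono fun χ' h => iterDirDeriv_comp_prodMk_left h L) c).self_of_nhds
    _ = dirDeriv (0, c) (iterDirDeriv L' f) (z, χ) :=
        dirDeriv_comp_prodMk_right (hf.iterDirDeriv L').differentiableAt c
    _ = iterDirDeriv L' (dirDeriv (0, c) f) (z, χ) :=
        (dirDeriv_iterDirDeriv_eventuallyEq hf _ L').self_of_nhds
    _ = iterDirDeriv L (fun z' => dirDeriv (0, c) f (z', χ)) z :=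
        (iterDirDeriv_comp_prodMk_left (hf.dirDeriv _) L).symm
    _ = _ :=
        (iterDirDeriv_congr_of_eventuallyEq (hnear_z.mono fun z' h =>
          (dirDeriv_comp_prodMk_right h.differentiableAt c).symm) L).self_of_nhds

end DirectionalDerivative

def multiIndexDirs (α : Fin n → ℕ) : List (Fin n → ℂ) :=
  (List.finRange n).flatMap fun i => List.replicate (α i) (Pi.single i 1)

lemma mpd_eq_iterDirDeriv (α : Fin n → ℕ) (f : (Fin n → ℂ) → ℂ) :
    mpd α f = iterDirDeriv (multiIndexDirs α) f := by
  suffices ∀ l : List (Fin n), ((l.map fun i => (pd i)^[α i]).foldr (· ∘ ·) id) f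
      = iterDirDeriv (l.flatMap fun i => List.replicate (α i) (Pi.single i 1)) f by
    rw [mpd, List.ofFn_eq_map]
    exact this _
  intro l
  induction l with
  | nil => rfl
  | cons k l ih =>
    simp only [List.map_cons, List.foldr_cons, Function.comp_apply, List.flatMap_cons,
      iterDirDeriv_append, iterDirDeriv_replicate, ih]
    rfl

lemma dual_apply_pi_single_comm {R ι : Type*} [CommSemiring R] [Fintype ι] [DecidableEq ι]
    (φ ψ : Module.Dual R (ι → R)) :
    φ (fun i => ψ (Pi.single i 1)) = ψ (fun i => φ (Pi.single i 1)) := by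
  have hsingle (i : ι) (c : R) : Pi.single i c = c • Pi.single i (1 : R) := by
    rw [← Pi.single_smul', smul_eq_mul, mul_one]
  conv_lhs => rw [← Finset.univ_sum_single (fun i => ψ (Pi.single i 1))]
  conv_rhs => rw [← Finset.univ_sum_single (fun i => φ (Pi.single i 1))]
  simp only [map_sum, hsingle _ (ψ _), hsingle _ (φ _), map_smul, smul_eq_mul, mul_comm]

theorem span_gradient_image_eq_top {Q : (Fin n → ℂ) → (Fin n → ℂ) → ℂ → ℂ}
    (hQ : AnalyticAt ℂ (fun p : (Fin n → ℂ) × (Fin n → ℂ) => Q p.1 p.2 0) 0)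
    (hM : FinNondeg Q) {V : Set (Fin n → ℂ)} (hV : V ∈ 𝓝 0) :
    Submodule.span ℂ ((fun b i => pd i (fun χ => Q b χ 0) 0) '' V) = ⊤ := by
  obtain ⟨K, hK⟩ := hM
  refine eq_top_iff.2 (hK ▸ Submodule.span_le.2 ?_)
  rintro _ ⟨α, -, rfl⟩
  refine (Subspace.forall_mem_dualAnnihilator_apply_eq_zero_iff _ _).1 fun φ hφ => ?_
  set c : Fin n → ℂ := fun i => φ (Pi.single i 1)
  have hvanish : (fun b => φ (fun i => pd i (fun χ => Q b χ 0) 0)) =ᶠ[𝓝 0] 0 :=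
    Filter.eventually_of_mem hV fun b hb =>
      (Submodule.mem_dualAnnihilator φ).1 hφ _ (Submodule.subset_span ⟨b, hb, rfl⟩)
  calc φ (fun i => pd i (fun χ => mpd α (fun z => Q z χ 0) 0) 0)
      = dirDeriv c (fun χ => iterDirDeriv (multiIndexDirs α) (fun z => Q z χ 0) 0) 0 := by
        simp only [mpd_eq_iterDirDeriv]
        exact dual_apply_pi_single_comm φ (fderiv ℂ _ 0 : (Fin n → ℂ) →L[ℂ] ℂ).toLinearMap
    _ = iterDirDeriv (multiIndexDirs α) (fun z => dirDeriv c (fun χ => Q z χ 0) 0) 0 :=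
        dirDeriv_iterDirDeriv_partial_comm (f := fun p => Q p.1 p.2 0) hQ _ c
    _ = iterDirDeriv (multiIndexDirs α) (fun b => φ (fun i => pd i (fun χ => Q b χ 0) 0)) 0 := by
        congr 1
        funext b
        exact (dual_apply_pi_single_comm φ (fderiv ℂ (fun χ => Q b χ 0) 0).toLinearMap).symm
    _ = 0 := by
        rw [(iterDirDeriv_congr_of_eventuallyEq hvanish _).self_of_nhds, iterDirDeriv_zero]
        rfl

theorem exists_linearIndependent_comp_of_span_image_eq_top {ι α K V : Type*} [Field K]
    [AddCommGroup V] [Module K V] (b : Module.Basis ι K V) {f : α → V} {S : Set α}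
    (hS : Submodule.span K (f '' S) = ⊤) :
    ∃ x : ι → α, (∀ j, x j ∈ S) ∧ LinearIndependent K (fun j => f (x j)) := by
  obtain ⟨t, hts, hspan, hli⟩ := exists_linearIndependent K (f '' S)
  let e := (Module.Basis.mk hli (by rw [Subtype.range_coe, hspan, hS])).indexEquiv b
  choose x hxS hxt using fun j => hts (e.symm j).2
  refine ⟨x, hxS, ?_⟩
  simp only [hxt]
  exact hli.comp _ e.symm.injective

lemma _root_.LinearIndependent.star {ι R M : Type*} [Semiring R] [StarRing R] [AddCommMonoid M]
    [Module R M] [StarAddMonoid M] [StarModule R M] {v : ι → M} (hv : LinearIndependent R v) :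
    LinearIndependent R (fun j => star (v j)) :=
  hv.map_of_injective_injectiveₛ (Star.star : R → R) (starAddEquiv : M ≃+ M).toAddMonoidHom
    star_injective star_injective fun r m => by simp [star_smul]

lemma pd_conj_comp_conjV {G : (Fin n → ℂ) → ℂ} {x : Fin n → ℂ}
    (hG : DifferentiableAt ℂ G (conjV x)) (i : Fin n) :
    pd i (fun z => starRingEnd ℂ (G (conjV z))) x = starRingEnd ℂ (pd i G (conjV x)) := by
  rw [show conjV x = star x from rfl] at hG
  change fderiv ℂ (fun z => star (G (star z))) x (Pi.single i 1)
    = star (fderiv ℂ G (star x) (Pi.single i 1))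
  let M : (Fin n → ℂ) →ₗ[ℂ] ℂ :=
    { toFun := fun v => star (fderiv ℂ G (star x) (star v))
      map_add' := by simp
      map_smul' := by simp }
  have hG' := (hG.hasFDerivAt.restrictScalars ℝ).comp x
    ((starL' ℝ : (Fin n → ℂ) ≃L[ℝ] (Fin n → ℂ)) : (Fin n → ℂ) →L[ℝ] (Fin n → ℂ)).hasFDerivAt
  -- The real derivative `star ∘ G' ∘ star` is complex linear, namely `M`.
  have hM : HasFDerivAt (fun z => star (G (star z))) (LinearMap.toContinuousLinearMap M) x :=
    hasFDerivAt_of_restrictScalars ℝ hG'.star (ContinuousLinearMap.ext fun v => by simp [M])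
  rw [hM.fderiv]
  simp [M]

lemma IsNormalDF.analyticAt_tau_zero {Q : (Fin n → ℂ) → (Fin n → ℂ) → ℂ → ℂ}
    (hQ : IsNormalDF Q) :
    AnalyticAt ℂ (fun p : (Fin n → ℂ) × (Fin n → ℂ) => Q p.1 p.2 0) 0 := by
  have h : AnalyticAt ℂ (fun q : (Fin n → ℂ) × (Fin n → ℂ) × ℂ => Q q.1 q.2.1 q.2.2) 0 :=
    hQ.1.self_of_nhds
  exact h.comp_of_eq (analyticAt_fst.prod (analyticAt_snd.prod analyticAt_const)) rfl

theorem exists_linearIndependent_gradient {Q : (Fin n → ℂ) → (Fin n → ℂ) → ℂ → ℂ}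
    (hQ : AnalyticAt ℂ (fun p : (Fin n → ℂ) × (Fin n → ℂ) => Q p.1 p.2 0) 0)
    (hM : FinNondeg Q) {U : Set (Fin n → ℂ)} (hU : U ∈ 𝓝 0) :
    ∃ b : Fin n → Fin n → ℂ, (∀ j, b j ∈ U) ∧
      LinearIndependent ℂ (fun j => (fun i => pd i (fun χ => Q (b j) χ 0) 0 : Fin n → ℂ)) :=
  exists_linearIndependent_comp_of_span_image_eq_top
    (f := fun b i => pd i (fun χ => Q b χ 0) 0) (Pi.basisFun ℂ (Fin n))
    (span_gradient_image_eq_top hQ hM hU)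

lemma gradient_QBar_conjV {Q : (Fin n → ℂ) → (Fin n → ℂ) → ℂ → ℂ} {b : Fin n → ℂ}
    (hb : DifferentiableAt ℂ (fun χ => Q b χ 0) 0) :
    (fun i => pd i (fun z => QBar Q (conjV b) z 0) 0)
      = star (fun i => pd i (fun χ => Q b χ 0) 0) := by
  have hconj₀ : conjV (0 : Fin n → ℂ) = 0 := star_zero _
  have hconj_conj : conjV (conjV b) = b := star_star _
  ext i
  have h := pd_conj_comp_conjV (x := 0) (by rwa [hconj₀]) i
  simpa [QBar, hconj_conj, hconj₀] using h

theorem statement9_general (n : ℕ)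
    (Q : (Fin n → ℂ) → (Fin n → ℂ) → ℂ → ℂ)
    (hQ : IsRealNormalDF Q)
    (hM : FinNondeg Q) :
    (∀ U ∈ 𝓝 (0 : Fin n → ℂ), ∃ a : Fin n → Fin n → ℂ, (∀ j, a j ∈ U) ∧
      LinearIndependent ℂ
        (fun j => (fun i => pd i (fun z => QBar Q (a j) z 0) 0 : Fin n → ℂ))) ∧
    (∀ U ∈ 𝓝 (0 : Fin n → ℂ), ∃ b : Fin n → Fin n → ℂ, (∀ j, b j ∈ U) ∧
      LinearIndependent ℂ
        (fun j => (fun i => pd i (fun χ => Q (b j) χ 0) 0 : Fin n → ℂ))) := by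
  have hQ₀ := hQ.1.analyticAt_tau_zero
  have hdiff : ∀ᶠ b in 𝓝 (0 : Fin n → ℂ), DifferentiableAt ℂ (fun χ => Q b χ 0) 0 :=
    ((continuous_id.prodMk continuous_const).continuousAt.eventually
      hQ₀.eventually_analyticAt).mono fun b hb =>
        (hb.comp (analyticAt_const.prod analyticAt_id)).differentiableAt
  refine ⟨fun U hU => ?_, fun U hU => exists_linearIndependent_gradient hQ₀ hM hU⟩
  have hU' : star ⁻¹' U ∩ {b | DifferentiableAt ℂ (fun χ => Q b χ 0) 0} ∈ 𝓝 0 :=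
    inter_mem (continuous_star.tendsto' 0 0 (star_zero _) hU) hdiff
  obtain ⟨b, hb, hli⟩ := exists_linearIndependent_gradient hQ₀ hM hU'
  refine ⟨fun j => conjV (b j), fun j => (hb j).1, ?_⟩
  convert hli.star using 1
  exact funext fun j => gradient_QBar_conjV (hb j).2

/-- Lemma 2.4: if `M` is finitely nondegenerate at `0`, then in every
neighborhood `U` of `0` one can find `a₁, …, aₙ` with the gradients `∂_z Q̄(aⱼ,0,0)` linearly
independent; equivalently, points `b₁, …, bₙ ∈ U` with the gradients `∂_χ Q(bⱼ,0,0)` linearly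
independent. -/
theorem statement9 (n : ℕ) (hn : 1 ≤ n)
    (Q : (Fin n → ℂ) → (Fin n → ℂ) → ℂ → ℂ)
    (hQ : IsRealNormalDF Q)
    (hM : FinNondeg Q) :
    (∀ U ∈ 𝓝 (0 : Fin n → ℂ), ∃ a : Fin n → Fin n → ℂ, (∀ j, a j ∈ U) ∧
      LinearIndependent ℂ
        (fun j => (fun i => pd i (fun z => QBar Q (a j) z 0) 0 : Fin n → ℂ))) ∧
    (∀ U ∈ 𝓝 (0 : Fin n → ℂ), ∃ b : Fin n → Fin n → ℂ, (∀ j, b j ∈ U) ∧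
      LinearIndependent ℂ
        (fun j => (fun i => pd i (fun χ => Q (b j) χ 0) 0 : Fin n → ℂ))) :=
  statement9_general n Q hQ hM

end HSPMpaper
end

section
/- Let n = 2 and define Q(z,χ,τ) := τ + 2i·z₁χ₁ and Q′(z,χ,τ) := τ + 2i·(z₁χ₁ + z₂χ₂) on ℂ² × ℂ² × ℂ. Then Q and Q′ are real normal defining functions of dimension 2, and the quadruple f(z,w) := (z₂ + z₁z₂, −z₂), g(z,w) := 2wz₂, f̃(χ,τ) := (2χ₁, 2χ₁ + iτ), g̃(χ,τ) := 0 is an HSPM sending (ℳ,0) into (ℳ′,0) for which: g does not vanish identically while g̃ ≡ 0, and det(∂f/∂z(z,0)) = −z₂ does not vanish identically while det(∂f̃/∂χ(χ,0)) ≡ 0 identically. -/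
open Filter Topology Complex

namespace HSPMpaper

variable {n : ℕ}

/-!
Both defining functions are rigid, `τ + ψ(z, χ)` with `conj ψ(χ̄, z̄) = -ψ(z, χ)`, hence real.
The Segre-preserving identity `2 z₂ Q = Q'(f, f̃, 0)` is a polynomial identity using `i² = -1`.
Since `f̃(χ, 0) = (2χ₁, 2χ₁)` depends on `χ₁` alone its Jacobian is singular, whereas
`det f_z(z, 0) = -z₂`. Finally `g` and `det f_z(·, 0)` are entire and not identically zero, so by
the identity principle they do not vanish on any neighbourhood of `0`.
-/

open scoped ContDiff

section Analytic

variable {𝕜 E F : Type*} [NontriviallyNormedField 𝕜] [NormedAddCommGroup E] [NormedSpace 𝕜 E]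
  [NormedAddCommGroup F] [NormedSpace 𝕜 F]

@[fun_prop]
theorem _root_.ContDiff.vecCons {m : ℕ} {k : WithTop ℕ∞} {f : E → F} {g : E → Fin m → F}
    (hf : ContDiff 𝕜 k f) (hg : ContDiff 𝕜 k g) :
    ContDiff 𝕜 k fun x => Matrix.vecCons (f x) (g x) :=
  contDiff_pi.2 <| Fin.cases hf fun i => (contDiff_apply 𝕜 F i).comp hg

theorem _root_.ContDiff.not_eventually_eq_zero [PreconnectedSpace E] {f : E → F}
    (hf : ContDiff 𝕜 ω f) {x : E} (hx : f x ≠ 0) (a : E) : ¬ ∀ᶠ y in 𝓝 a, f y = 0 := fun h =>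
  hx (congrFun (hf.analyticOnNhd.eq_of_eventuallyEq analyticOnNhd_const h) x)

end Analytic

theorem isRealNormalDF_rigid {ψ : (Fin n → ℂ) → (Fin n → ℂ) → ℂ}
    (hψ : ContDiff ℂ ω fun q : (Fin n → ℂ) × (Fin n → ℂ) => ψ q.1 q.2)
    (hψ_zero_left : ∀ χ, ψ 0 χ = 0) (hψ_zero_right : ∀ z, ψ z 0 = 0)
    (hψ_skew : ∀ z χ, starRingEnd ℂ (ψ (conjV χ) (conjV z)) = -ψ z χ) :
    IsRealNormalDF fun z χ τ => τ + ψ z χ := by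
  refine ⟨⟨.of_forall fun p => ContDiffAt.analyticAt ?_, .of_forall fun p => ?_⟩,
    .of_forall fun p => ?_⟩
  · have : ContDiff ℂ ω fun q : (Fin n → ℂ) × (Fin n → ℂ) × ℂ => ψ q.1 q.2.1 :=
      hψ.comp (contDiff_fst.prodMk (contDiff_fst.comp contDiff_snd))
    fun_prop
  · simp [hψ_zero_left, hψ_zero_right]
  · simp [QBar, hψ_skew]

namespace Remark11

def Q : (Fin 2 → ℂ) → (Fin 2 → ℂ) → ℂ → ℂ := fun z χ τ => τ + 2 * I * (z 0 * χ 0)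

def Q' : (Fin 2 → ℂ) → (Fin 2 → ℂ) → ℂ → ℂ := fun z χ τ => τ + 2 * I * (z 0 * χ 0 + z 1 * χ 1)

def f : (Fin 2 → ℂ) → ℂ → Fin 2 → ℂ := fun z _ => ![z 1 + z 0 * z 1, -(z 1)]

def g : (Fin 2 → ℂ) → ℂ → ℂ := fun z w => 2 * w * z 1

def ft : (Fin 2 → ℂ) → ℂ → Fin 2 → ℂ := fun χ τ => ![2 * χ 0, 2 * χ 0 + I * τ]

theorem isRealNormalDF_Q : IsRealNormalDF Q :=
  isRealNormalDF_rigid (by fun_prop) (by simp) (by simp) fun z χ => by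
    simp only [conjV, map_mul, map_ofNat, conj_I, conj_conj]; ring

theorem isRealNormalDF_Q' : IsRealNormalDF Q' :=
  isRealNormalDF_rigid (by fun_prop) (by simp) (by simp) fun z χ => by
    simp only [conjV, map_mul, map_add, map_ofNat, conj_I, conj_conj]; ring

theorem isHSPM : IsHSPM Q Q' f g ft fun _ _ => 0 := by
  refine ⟨.of_forall fun p => ContDiffAt.analyticAt ?_,
    .of_forall fun p => ContDiffAt.analyticAt ?_, .of_forall fun p => ContDiffAt.analyticAt ?_,
    .of_forall fun _ => analyticAt_const,
    ?_, ?_, ?_, rfl, .of_forall fun ⟨z, χ, τ⟩ => ?_⟩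
  · unfold f; fun_prop
  · unfold g; fun_prop
  · unfold ft; fun_prop
  · ext i; fin_cases i <;> simp [f]
  · simp [g]
  · ext i; fin_cases i <;> simp [ft]
  · simp only [Q, Q', f, g, ft, Matrix.cons_val_zero, Matrix.cons_val_one]
    linear_combination 2 * τ * z 1 * I_mul_I

theorem jacz_f (z : Fin 2 → ℂ) : jacz f z = !![z 1, 1 + z 0; 0, -1] := by
  ext i j
  fin_cases i <;> fin_cases j <;>
    simp (disch := fun_prop) [jacz, pd, f, fderiv_fun_add, fderiv_fun_mul,
      (hasFDerivAt_apply _ _).fderiv, Pi.single_apply]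

theorem jacz_ft (χ : Fin 2 → ℂ) : jacz ft χ = !![2, 0; 2, 0] := by
  ext i j
  fin_cases i <;> fin_cases j <;>
    simp (disch := fun_prop) [jacz, pd, ft, fderiv_fun_mul,
      (hasFDerivAt_apply _ _).fderiv, Pi.single_apply]

theorem det_jacz_f (z : Fin 2 → ℂ) : (jacz f z).det = -(z 1) := by
  simp [jacz_f, Matrix.det_fin_two]

theorem det_jacz_ft (χ : Fin 2 → ℂ) : (jacz ft χ).det = 0 := by
  simp [jacz_ft, Matrix.det_fin_two]

theorem not_eventually_g_eq_zero : ¬ ∀ᶠ p in 𝓝 (0 : (Fin 2 → ℂ) × ℂ), g p.1 p.2 = 0 :=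
  ContDiff.not_eventually_eq_zero (𝕜 := ℂ) (f := fun p : (Fin 2 → ℂ) × ℂ => g p.1 p.2)
    (x := (![0, 1], 1)) (by unfold g; fun_prop) (by simp [g]) 0

theorem not_eventually_det_jacz_f_eq_zero :
    ¬ ∀ᶠ z in 𝓝 (0 : Fin 2 → ℂ), (jacz f z).det = 0 := by
  simpa only [det_jacz_f] using
    ContDiff.not_eventually_eq_zero (𝕜 := ℂ) (f := fun z : Fin 2 → ℂ => -(z 1)) (x := ![0, 1])
      (by fun_prop) (by simp) 0

end Remark11

/-- Remark 1.1: an explicit HSPM between the complexifications of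
`Im w = |z₁|²` and `Im w' = |z₁'|² + |z₂'|²` in `ℂ³` with `g ≢ 0` but `g̃ ≡ 0`, and
`det f_z(·,0) ≢ 0` but `det f̃_χ(·,0) ≡ 0`. -/
theorem statement12 :
    let Q : (Fin 2 → ℂ) → (Fin 2 → ℂ) → ℂ → ℂ :=
      fun z χ τ => τ + 2 * Complex.I * (z 0 * χ 0)
    let Q' : (Fin 2 → ℂ) → (Fin 2 → ℂ) → ℂ → ℂ :=
      fun z χ τ => τ + 2 * Complex.I * (z 0 * χ 0 + z 1 * χ 1)
    let f : (Fin 2 → ℂ) → ℂ → Fin 2 → ℂ := fun z _ => ![z 1 + z 0 * z 1, -(z 1)]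
    let g : (Fin 2 → ℂ) → ℂ → ℂ := fun z w => 2 * w * z 1
    let ft : (Fin 2 → ℂ) → ℂ → Fin 2 → ℂ := fun χ τ => ![2 * χ 0, 2 * χ 0 + Complex.I * τ]
    let gt : (Fin 2 → ℂ) → ℂ → ℂ := fun _ _ => 0
    IsRealNormalDF Q ∧ IsRealNormalDF Q' ∧ IsHSPM Q Q' f g ft gt ∧
    (¬ ∀ᶠ p in 𝓝 (0 : (Fin 2 → ℂ) × ℂ), g p.1 p.2 = 0) ∧
    (∀ (χ : Fin 2 → ℂ) (τ : ℂ), gt χ τ = 0) ∧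
    (∀ z : Fin 2 → ℂ, (jacz f z).det = -(z 1)) ∧
    (¬ ∀ᶠ z in 𝓝 (0 : Fin 2 → ℂ), (jacz f z).det = 0) ∧
    (∀ χ : Fin 2 → ℂ, (jacz ft χ).det = 0) :=
  ⟨Remark11.isRealNormalDF_Q, Remark11.isRealNormalDF_Q', Remark11.isHSPM,
    Remark11.not_eventually_g_eq_zero, fun _ _ => rfl, Remark11.det_jacz_f,
    Remark11.not_eventually_det_jacz_f_eq_zero, Remark11.det_jacz_ft⟩

end HSPMpaper
end

section
/- Let n = 1 and define Q(z,χ,τ) := τ·exp(izχ) on ℂ × ℂ × ℂ. Then Q is a real normal defining function of dimension 1 which is of infinite type at 0 (Q(z,χ,0) ≡ 0). The quadruple f(z,w) := √2·z, g(z,w) := w², f̃(χ,τ) := √2·χ, g̃(χ,τ) := τ² is an HSPM sending (ℳ,0) into (ℳ,0) which is totally Segre nondegenerate at 0 (indeed ∂f/∂z ≡ √2 and ∂f̃/∂χ ≡ √2), but which is not Segre transversal to ℳ at 0, since ∂g/∂w(0,0) = 0. -/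
open Filter Topology Complex

namespace HSPMpaper

variable {n : ℕ}

lemma anal_eval (p : (Fin 1 → ℂ) × ℂ) :
    AnalyticAt ℂ (fun q : (Fin 1 → ℂ) × ℂ => q.1 0) p :=
  ((ContinuousLinearMap.proj 0 : (Fin 1 → ℂ) →L[ℂ] ℂ).comp
    (ContinuousLinearMap.fst ℂ (Fin 1 → ℂ) ℂ)).analyticAt p

lemma sqrt2_mul_self : ((Real.sqrt 2 : ℝ) : ℂ) * ((Real.sqrt 2 : ℝ) : ℂ) = 2 := by
  rw [← Complex.ofReal_mul, Real.mul_self_sqrt (by norm_num)]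
  norm_num

lemma jacz_const_mul (c : ℂ) (f : (Fin 1 → ℂ) → ℂ → Fin 1 → ℂ)
    (hf : ∀ z w i, f z w i = c * z 0) (z : Fin 1 → ℂ) : (jacz f z).det = c := by
  have h : (fun z' : Fin 1 → ℂ => f z' 0 0) = fun z' => c * z' 0 := by
    funext z'; exact hf z' 0 0
  rw [Matrix.det_fin_one]
  show pd 0 (fun z' => f z' 0 0) z = c
  rw [h]
  unfold pd
  have hd : HasFDerivAt (fun z' : Fin 1 → ℂ => c * z' 0)
      (c • (ContinuousLinearMap.proj 0 : (Fin 1 → ℂ) →L[ℂ] ℂ)) z :=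
    ((ContinuousLinearMap.proj 0 : (Fin 1 → ℂ) →L[ℂ] ℂ).hasFDerivAt).const_mul c
  rw [hd.fderiv]
  simp

/-- Example 3.1: for the infinite type hypersurface with
`Q(z,χ,τ) = τ·e^{izχ}`, the HSPM `(√2 z, w², √2 χ, τ²)` is totally Segre nondegenerate at `0`
but not Segre transversal at `0`. -/
theorem statement13 :
    let Q : (Fin 1 → ℂ) → (Fin 1 → ℂ) → ℂ → ℂ :=
      fun z χ τ => τ * Complex.exp (Complex.I * (z 0 * χ 0))
    let f : (Fin 1 → ℂ) → ℂ → Fin 1 → ℂ := fun z _ => fun _ => (Real.sqrt 2 : ℂ) * z 0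
    let g : (Fin 1 → ℂ) → ℂ → ℂ := fun _ w => w ^ 2
    let ft : (Fin 1 → ℂ) → ℂ → Fin 1 → ℂ := fun χ _ => fun _ => (Real.sqrt 2 : ℂ) * χ 0
    let gt : (Fin 1 → ℂ) → ℂ → ℂ := fun _ τ => τ ^ 2
    IsRealNormalDF Q ∧
    (∀ z χ : Fin 1 → ℂ, Q z χ 0 = 0) ∧
    IsHSPM Q Q f g ft gt ∧
    TotallySegreNondeg f ft ∧
    (∀ z : Fin 1 → ℂ, (jacz f z).det = (Real.sqrt 2 : ℂ)) ∧
    (∀ χ : Fin 1 → ℂ, (jacz ft χ).det = (Real.sqrt 2 : ℂ)) ∧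
    deriv (fun w => g 0 w) 0 = 0 ∧
    ¬ SegreTransversal g := by
  intro Q f g ft gt
  have hs2 : ((Real.sqrt 2 : ℝ) : ℂ) * ((Real.sqrt 2 : ℝ) : ℂ) = 2 := sqrt2_mul_self
  have hQ0 : ∀ z χ : Fin 1 → ℂ, Q z χ 0 = 0 := by
    intro z χ; simp [Q]
  have hdet_f : ∀ z : Fin 1 → ℂ, (jacz f z).det = (Real.sqrt 2 : ℂ) :=
    jacz_const_mul _ f (fun z w i => rfl)
  have hdet_ft : ∀ χ : Fin 1 → ℂ, (jacz ft χ).det = (Real.sqrt 2 : ℂ) :=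
    jacz_const_mul _ ft (fun z w i => rfl)
  have hs2ne : ((Real.sqrt 2 : ℝ) : ℂ) ≠ 0 := by
    simp only [ne_eq, Complex.ofReal_eq_zero]
    positivity
  have hQanal : ∀ p : (Fin 1 → ℂ) × (Fin 1 → ℂ) × ℂ,
      AnalyticAt ℂ (fun q : (Fin 1 → ℂ) × (Fin 1 → ℂ) × ℂ => Q q.1 q.2.1 q.2.2) p := by
    intro p
    apply AnalyticAt.mul
    · exact AnalyticAt.comp analyticAt_snd analyticAt_snd
    · apply analyticAt_cexp.comp
      apply AnalyticAt.mul analyticAt_const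
      apply AnalyticAt.mul
      · exact ((ContinuousLinearMap.proj 0 : (Fin 1 → ℂ) →L[ℂ] ℂ).analyticAt _).comp
          analyticAt_fst
      · exact ((ContinuousLinearMap.proj 0 : (Fin 1 → ℂ) →L[ℂ] ℂ).analyticAt _).comp
          (AnalyticAt.comp analyticAt_fst analyticAt_snd)
  refine ⟨⟨⟨Filter.Eventually.of_forall hQanal, Filter.Eventually.of_forall ?_⟩,
      Filter.Eventually.of_forall ?_⟩, hQ0, ?_, ?_, hdet_f, hdet_ft, ?_, ?_⟩
  · intro p
    constructor <;> simp [Q]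
  · intro p
    show (starRingEnd ℂ) ((starRingEnd ℂ) p.2.2 *
        Complex.exp (Complex.I * ((starRingEnd ℂ) (p.2.1 0) * (starRingEnd ℂ) (p.1 0)))) *
        Complex.exp (Complex.I * (p.1 0 * p.2.1 0)) = p.2.2
    rw [map_mul, Complex.conj_conj, ← Complex.exp_conj]
    have h1 : (starRingEnd ℂ) (Complex.I * ((starRingEnd ℂ) (p.2.1 0) * (starRingEnd ℂ) (p.1 0)))
        = -(Complex.I * (p.1 0 * p.2.1 0)) := by
      simp only [map_mul, Complex.conj_I, Complex.conj_conj]; ring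
    rw [h1, mul_assoc, ← Complex.exp_add, neg_add_cancel, Complex.exp_zero, mul_one]
  · -- IsHSPM
    refine ⟨?_, ?_, ?_, ?_, ?_, ?_, ?_, ?_, Filter.Eventually.of_forall ?_⟩
    · exact Filter.Eventually.of_forall fun p => by
        apply AnalyticAt.pi; intro i
        exact analyticAt_const.mul (anal_eval p)
    · exact Filter.Eventually.of_forall fun p => analyticAt_snd.pow 2
    · exact Filter.Eventually.of_forall fun p => by
        apply AnalyticAt.pi; intro i
        exact analyticAt_const.mul (anal_eval p)
    · exact Filter.Eventually.of_forall fun p => analyticAt_snd.pow 2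
    · funext i; simp [f]
    · simp [g]
    · funext i; simp [ft]
    · simp [gt]
    · intro p
      show (p.2.2 * Complex.exp (Complex.I * (p.1 0 * p.2.1 0))) ^ 2 =
        p.2.2 ^ 2 * Complex.exp (Complex.I *
          (((Real.sqrt 2 : ℝ) : ℂ) * p.1 0 * (((Real.sqrt 2 : ℝ) : ℂ) * p.2.1 0)))
      rw [mul_pow, ← Complex.exp_nat_mul]
      congr 2
      have : ((Real.sqrt 2 : ℝ) : ℂ) * p.1 0 * (((Real.sqrt 2 : ℝ) : ℂ) * p.2.1 0)
          = (((Real.sqrt 2 : ℝ) : ℂ) * ((Real.sqrt 2 : ℝ) : ℂ)) * (p.1 0 * p.2.1 0) := by ring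
      rw [this, hs2]
      ring
  · -- TotallySegreNondeg
    constructor
    · intro h
      obtain ⟨z, hz⟩ := h.exists
      rw [hdet_f z] at hz; exact hs2ne hz
    · intro h
      obtain ⟨z, hz⟩ := h.exists
      rw [hdet_ft z] at hz; exact hs2ne hz
  · -- deriv
    show deriv (fun w : ℂ => w ^ 2) 0 = 0
    simp
  · -- not SegreTransversal
    intro h
    apply h
    show deriv (fun w : ℂ => w ^ 2) 0 = 0
    simp


end HSPMpaper
end

section
/- Let n = 2 and define Q(z,χ,τ) := τ + 2i·z₁χ₁ and Q′(z,χ,τ) := τ + 2i·(z₁χ₁ + z₂χ₂) on ℂ² × ℂ² × ℂ. Then Q and Q′ are real normal defining functions of dimension 2; Q is not holomorphically nondegenerate at 0, while Q′ is finitely nondegenerate at 0. The quadruple f(z,w) := (z₁², 2z₁), g(z,w) := w², f̃(χ,τ) := (2iχ₁², χ₁τ), g̃(χ,τ) := τ² is an HSPM sending (ℳ,0) into (ℳ′,0) which is not transversally null (g ≢ 0), yet det(∂f/∂z(z,w)) ≡ 0 and det(∂f̃/∂χ(χ,τ)) ≡ 0 identically, the Jacobian determinants of (f,g) and of (f̃,g̃)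 vanish identically, and ∂g/∂w(0,0) = 0. -/
/-! Both defining functions are hyperquadrics `τ + 2i ∑_{i ∈ s} z_i χ_i`. When `s ≠ univ` such a
function, and with it every `∂_z^α Q(0,χ,τ)`, is independent of some `χ_k`, so a column of each
Jacobian in the definition of holomorphic nondegeneracy vanishes; independence of `z₂` and `χ₂`
kills the Jacobian determinants of the map in the same way. For `s = univ` the vectors
`∂_χ ∂_{z_c} Q'(0) = 2i e_c` span `ℂⁿ`. The map is Segre preserving because
`(τ + 2i z₁χ₁)² = τ² + 2i (z₁² · 2iχ₁² + 2z₁ · χ₁τ)`. -/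

open Filter Topology Complex

namespace HSPMpaper

variable {n : ℕ}

theorem fderiv_apply_eq_zero_of_forall_add_smul {𝕜 E F : Type*} [NontriviallyNormedField 𝕜]
    [NormedAddCommGroup E] [NormedSpace 𝕜 E] [NormedAddCommGroup F] [NormedSpace 𝕜 F]
    {f : E → F} {x v : E} (h : ∀ t : 𝕜, f (x + t • v) = f x) : fderiv 𝕜 f x v = 0 := by
  by_cases hf : DifferentiableAt 𝕜 f x
  · rw [← hf.lineDeriv_eq_fderiv, lineDeriv, funext h, deriv_const]
  · rw [fderiv_zero_of_not_differentiableAt hf, zero_apply]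

theorem dirCT_castSucc (k : Fin n) : dirCT n k.castSucc = (Pi.single k 1, 0) := by
  simp [dirCT]

theorem det_pd_eq_zero_of_forall_add_smul_single {f : (Fin n → ℂ) → Fin n → ℂ} (k : Fin n)
    (hf : ∀ z (t : ℂ), f (z + t • Pi.single k 1) = f z) (z : Fin n → ℂ) :
    (Matrix.of fun i j : Fin n => pd j (fun z' => f z' i) z).det = 0 := by
  refine Matrix.det_eq_zero_of_column_eq_zero k fun i => ?_
  exact fderiv_apply_eq_zero_of_forall_add_smul fun t => by simp only [hf]

theorem det_jacFull_eq_zero_of_forall_add_smul_single {f : (Fin n → ℂ) → ℂ → Fin n → ℂ}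
    {g : (Fin n → ℂ) → ℂ → ℂ} (k : Fin n)
    (hf : ∀ z w (t : ℂ), f (z + t • Pi.single k 1) w = f z w)
    (hg : ∀ z w (t : ℂ), g (z + t • Pi.single k 1) w = g z w) (p : (Fin n → ℂ) × ℂ) :
    (jacFull f g p).det = 0 := by
  refine Matrix.det_eq_zero_of_column_eq_zero k.castSucc fun i => ?_
  rw [jacFull, Matrix.of_apply, dirCT_castSucc]
  exact fderiv_apply_eq_zero_of_forall_add_smul fun t => by simp [hf, hg]

theorem not_holNondeg_of_forall_add_smul_single {Q : (Fin n → ℂ) → (Fin n → ℂ) → ℂ → ℂ}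
    (k : Fin n) (hQ : ∀ z χ τ (t : ℂ), Q z (χ + t • Pi.single k 1) τ = Q z χ τ) :
    ¬ HolNondeg Q := by
  rintro ⟨K, A, -, hA⟩
  refine hA (Eventually.of_forall fun p => ?_)
  refine Matrix.det_eq_zero_of_column_eq_zero k.castSucc fun j => ?_
  rw [Matrix.of_apply, dirCT_castSucc]
  exact fderiv_apply_eq_zero_of_forall_add_smul fun t => by simp [hQ]

theorem foldr_comp_replicate_id {X : Type*} (m : ℕ) :
    (List.replicate m (id : X → X)).foldr (· ∘ ·) id = id := by
  induction m <;> simp [List.replicate_succ, *]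

theorem foldr_comp_ofFn_iterate_single {X : Type*} {m : ℕ} (D : Fin m → X → X) (c : Fin m) :
    (List.ofFn fun i => (D i)^[(Pi.single c 1 : Fin m → ℕ) i]).foldr (· ∘ ·) id = D c := by
  induction m with
  | zero => exact c.elim0
  | succ m ih =>
    cases c using Fin.cases with
    | zero => simp [List.ofFn_succ, Pi.single_apply, foldr_comp_replicate_id]
    | succ c =>
      simpa [List.ofFn_succ, Pi.single_apply, (Fin.succ_ne_zero c).symm] using
        ih (fun i => D i.succ) c

theorem mpd_single (c : Fin n) (F : (Fin n → ℂ) → ℂ) : mpd (Pi.single c 1) F = pd c F :=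
  congrFun (foldr_comp_ofFn_iterate_single _ c) F

@[fun_prop]
theorem analyticAt_apply {ι : Type*} [Fintype ι] (i : ι) (x : ι → ℂ) :
    AnalyticAt ℂ (fun f : ι → ℂ => f i) x :=
  (ContinuousLinearMap.proj (R := ℂ) (φ := fun _ : ι => ℂ) i).analyticAt x

attribute [local fun_prop] analyticAt_fst analyticAt_snd

def hyperquadric (s : Finset (Fin n)) : (Fin n → ℂ) → (Fin n → ℂ) → ℂ → ℂ :=
  fun z χ τ => τ + 2 * I * ∑ i ∈ s, z i * χ i

theorem isRealNormalDF_hyperquadric (s : Finset (Fin n)) : IsRealNormalDF (hyperquadric s) := by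
  refine ⟨⟨.of_forall fun p => ?_, .of_forall fun p => ?_⟩, .of_forall fun p => ?_⟩
  · simp only [hyperquadric]
    fun_prop
  · simp [hyperquadric]
  · simp [hyperquadric, QBar, conjV, map_sum, map_ofNat, mul_comm]

theorem hyperquadric_add_smul_single {s : Finset (Fin n)} {k : Fin n} (hk : k ∉ s)
    (z χ : Fin n → ℂ) (τ t : ℂ) :
    hyperquadric s z (χ + t • Pi.single k 1) τ = hyperquadric s z χ τ := by
  simp only [hyperquadric]
  congr 2
  refine Finset.sum_congr rfl fun i hi => ?_
  simp [ne_of_mem_of_not_mem hi hk]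

theorem not_holNondeg_hyperquadric {s : Finset (Fin n)} (hs : s ≠ Finset.univ) :
    ¬ HolNondeg (hyperquadric s) := by
  obtain ⟨k, hk⟩ := not_forall.1 (mt Finset.eq_univ_iff_forall.2 hs)
  exact not_holNondeg_of_forall_add_smul_single k fun z χ τ t =>
    hyperquadric_add_smul_single hk z χ τ t

theorem pd_mpd_single_hyperquadric_univ (c : Fin n) :
    (fun i => pd i (fun χ => mpd (Pi.single c 1) (fun z => hyperquadric .univ z χ 0) 0) 0) =
      (2 * I) • Pi.single c 1 := by
  ext i
  simp (disch := fun_prop) [mpd_single, pd, hyperquadric, fderiv_const_mul, fderiv_fun_sum,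
    fderiv_mul_const, (hasFDerivAt_apply _ _).fderiv, Pi.single_apply, eq_comm]

theorem finNondeg_hyperquadric_univ : FinNondeg (hyperquadric (.univ : Finset (Fin n))) := by
  refine ⟨1, eq_top_iff.2 ?_⟩
  rw [← (Pi.basisFun ℂ (Fin n)).span_eq, Submodule.span_le]
  rintro _ ⟨c, rfl⟩
  rw [Pi.basisFun_apply, SetLike.mem_coe]
  have hc : (2 * I) • Pi.single c 1 ∈ Submodule.span ℂ {v : Fin n → ℂ | ∃ α : Fin n → ℕ,
      (∑ i, α i) ≤ 1 ∧ v = fun i => pd i (fun χ => mpd α (fun z => hyperquadric .univ z χ 0) 0) 0} :=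
    Submodule.subset_span ⟨Pi.single c 1, by simp, (pd_mpd_single_hyperquadric_univ c).symm⟩
  have := Submodule.smul_mem _ (2 * I)⁻¹ hc
  rwa [smul_smul, inv_mul_cancel₀ (by simp), one_smul] at this

theorem isHSPM_hyperquadric_sq :
    IsHSPM (hyperquadric {0}) (hyperquadric (.univ : Finset (Fin 2)))
      (fun z _ => ![z 0 ^ 2, 2 * z 0]) (fun _ w => w ^ 2)
      (fun χ τ => ![2 * I * χ 0 ^ 2, χ 0 * τ]) (fun _ τ => τ ^ 2) := by
  refine ⟨.of_forall fun p => ?_, .of_forall fun p => ?_, .of_forall fun p => ?_,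
    .of_forall fun p => ?_, ?_, ?_, ?_, ?_, .of_forall fun p => ?_⟩
  · exact AnalyticAt.pi fun i => by fin_cases i <;> simp <;> fun_prop
  · fun_prop
  · exact AnalyticAt.pi fun i => by fin_cases i <;> simp <;> fun_prop
  · fun_prop
  · simp
  · simp
  · simp
  · simp
  · simp [hyperquadric, Fin.sum_univ_two]
    ring

theorem not_eventually_snd_sq_eq_zero {E : Type*} [TopologicalSpace E] [Zero E] :
    ¬ ∀ᶠ p in 𝓝 (0 : E × ℂ), p.2 ^ 2 = 0 := by
  intro h
  have hline : Tendsto (fun t : ℂ => ((0 : E), t)) (𝓝[≠] 0) (𝓝 0) :=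
    (Continuous.prodMk continuous_const continuous_id).tendsto' 0 0 rfl |>.mono_left
      nhdsWithin_le_nhds
  obtain ⟨t, ht, ht0⟩ := ((hline.eventually h).and self_mem_nhdsWithin).exists
  exact pow_ne_zero 2 ht0 ht

/-- Example 3.3: an explicit HSPM between the complexifications of
`Im w = |z₁|²` (holomorphically degenerate) and `Im w' = |z₁'|² + |z₂'|²` (finitely
nondegenerate) which is not transversally null, yet all relevant Jacobian determinants vanish
identically and `∂g/∂w(0,0) = 0`. -/
theorem statement14 :
    let Q : (Fin 2 → ℂ) → (Fin 2 → ℂ) → ℂ → ℂ :=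
      fun z χ τ => τ + 2 * Complex.I * (z 0 * χ 0)
    let Q' : (Fin 2 → ℂ) → (Fin 2 → ℂ) → ℂ → ℂ :=
      fun z χ τ => τ + 2 * Complex.I * (z 0 * χ 0 + z 1 * χ 1)
    let f : (Fin 2 → ℂ) → ℂ → Fin 2 → ℂ := fun z _ => ![z 0 ^ 2, 2 * z 0]
    let g : (Fin 2 → ℂ) → ℂ → ℂ := fun _ w => w ^ 2
    let ft : (Fin 2 → ℂ) → ℂ → Fin 2 → ℂ := fun χ τ => ![2 * Complex.I * χ 0 ^ 2, χ 0 * τ]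
    let gt : (Fin 2 → ℂ) → ℂ → ℂ := fun _ τ => τ ^ 2
    IsRealNormalDF Q ∧ IsRealNormalDF Q' ∧
    ¬ HolNondeg Q ∧ FinNondeg Q' ∧
    IsHSPM Q Q' f g ft gt ∧
    ¬ TransversallyNull g gt ∧
    (∀ (w : ℂ) (z : Fin 2 → ℂ),
      (Matrix.of fun i j : Fin 2 => pd j (fun z' => f z' w i) z).det = 0) ∧
    (∀ (τ : ℂ) (χ : Fin 2 → ℂ),
      (Matrix.of fun i j : Fin 2 => pd j (fun χ' => ft χ' τ i) χ).det = 0) ∧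
    (∀ p : (Fin 2 → ℂ) × ℂ, (jacFull f g p).det = 0) ∧
    (∀ p : (Fin 2 → ℂ) × ℂ, (jacFull ft gt p).det = 0) ∧
    deriv (fun w => g 0 w) 0 = 0 := by
  intro Q Q' f g ft gt
  have hQ : Q = hyperquadric {0} := by ext; simp [Q, hyperquadric]
  have hQ' : Q' = hyperquadric .univ := by ext; simp [Q', hyperquadric, Fin.sum_univ_two]
  rw [hQ, hQ']
  refine ⟨isRealNormalDF_hyperquadric _, isRealNormalDF_hyperquadric _,
    not_holNondeg_hyperquadric (by decide), finNondeg_hyperquadric_univ, isHSPM_hyperquadric_sq,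
    fun h => not_eventually_snd_sq_eq_zero h.1,
    fun w => det_pd_eq_zero_of_forall_add_smul_single 1 fun z t => by simp [f],
    fun τ => det_pd_eq_zero_of_forall_add_smul_single 1 fun χ t => by simp [ft],
    det_jacFull_eq_zero_of_forall_add_smul_single 1 (by simp [f]) (by simp [g]),
    det_jacFull_eq_zero_of_forall_add_smul_single 1 (by simp [ft]) (by simp [gt]), by simp [g]⟩

end HSPMpaper
end
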